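/- Positive entries are unchanged after diagonal scaling: for every row i with e_i < 0 and every (i,j) ∈ S̃ with A_{ij} > 0, one has Ã_{ij}/Ã_{ii} = A_{ij}/A_{ii}. That is, on rows where e_i < 0, the positive entries of D̃^{−1}Ã coincide with the corresponding positive entries of D^{−1}A, where D and D̃ denote the diagonals of A and Ã. -/

import Mathlib

/-!
On a row with `e < 0`, every retained positive entry, the diagonal included, is multiplied by
the same factor `1 + e / T = (T + e) / T`, so their ratios survive. The factor is positive:
the row sum `∑_{S̃} A + e` is nonnegative and a retained negative entry makes `∑_{S̃} A < T`,
so `T + e > 0`, and then `T > -e > 0`.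
-/

open Finset

section RowSums

variable {ι : Type*} [Fintype ι] (r : ι → ℝ) (p : ι → Prop) [DecidablePred p]

theorem sum_ite_ne_zero_and_not_add_sum_ite :
    (∑ k, if r k ≠ 0 ∧ ¬ p k then r k else 0) + (∑ k, if p k then r k else 0) = ∑ k, r k := by
  rw [← sum_add_distrib]
  refine sum_congr rfl fun k _ => ?_
  by_cases hp : p k <;> by_cases hr : r k = 0 <;> simp [hp, hr]

variable {r p}

theorem sum_ite_lt_sum_ite_abs (hneg : ∃ k, p k ∧ r k < 0) :
    (∑ k, if p k then r k else 0) < ∑ k, if p k then |r k| else 0 := by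
  obtain ⟨k, hpk, hrk⟩ := hneg
  refine sum_lt_sum (fun m _ => ?_) ⟨k, mem_univ k, ?_⟩
  · split_ifs
    exacts [le_abs_self _, le_rfl]
  · simpa [hpk] using hrk.trans_le (abs_nonneg (r k))

theorem sum_ite_abs_add_sum_ite_ne_zero_and_not_pos (hsum : 0 ≤ ∑ k, r k)
    (hneg : ∃ k, p k ∧ r k < 0) :
    0 < (∑ k, if p k then |r k| else 0) + ∑ k, if r k ≠ 0 ∧ ¬ p k then r k else 0 := by
  linarith [sum_ite_ne_zero_and_not_add_sum_ite r p, sum_ite_lt_sum_ite_abs hneg]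

end RowSums

theorem add_mul_abs_div_of_pos {a : ℝ} (ha : 0 < a) (e T : ℝ) :
    a + e * |a| / T = a * (1 + e / T) := by
  rw [abs_of_pos ha]
  ring

theorem distributed_lumping_positive_entries_unchanged_general
    (n : ℕ)
    (A : Matrix (Fin n) (Fin n) ℝ)
    (Stil : Fin n → Fin n → Prop) [DecidableRel Stil]
    (hdiagmem : ∀ i, Stil i i)
    (e T : Fin n → ℝ)
    (he : ∀ i, e i = ∑ k, if A i k ≠ 0 ∧ ¬ Stil i k then A i k else 0)
    (hT : ∀ i, T i = ∑ k, if Stil i k then |A i k| else 0)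
    (Atil : Matrix (Fin n) (Fin n) ℝ)
    (hAtil : ∀ i j, Atil i j =
      if Stil i j then
        (if e i < 0 then A i j + e i * |A i j| / T i
         else if i = j then A i i + e i else A i j)
      else 0)
    (hApos : ∀ i, 0 < A i i)
    (hrowsum : ∀ i, 0 ≤ ∑ j, A i j)
    (hneg : ∀ i, ∃ k, k ≠ i ∧ Stil i k ∧ A i k < 0) :
    ∀ i, e i < 0 → ∀ j, Stil i j → 0 < A i j →
      Atil i j / Atil i i = A i j / A i i := by
  intro i hei j hSj hApj
  have hTe : 0 < T i + e i := by
    obtain ⟨k, -, hSk, hAk⟩ := hneg i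
    rw [hT, he]
    exact sum_ite_abs_add_sum_ite_ne_zero_and_not_pos (hrowsum i) ⟨k, hSk, hAk⟩
  have hfactor : 0 < 1 + e i / T i := by
    have hTpos : 0 < T i := by linarith
    rw [one_add_div hTpos.ne']
    positivity
  have hscale : ∀ k, Stil i k → 0 < A i k → Atil i k = A i k * (1 + e i / T i) := fun k hSk hAk => by
    rw [hAtil, if_pos hSk, if_pos hei, add_mul_abs_div_of_pos hAk]
  rw [hscale j hSj hApj, hscale i (hdiagmem i) (hApos i), mul_div_mul_right _ _ hfactor.ne']

/-- **Positive entries are unchanged after diagonal scaling.**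
On rows where `e i < 0`, the positive retained entries of the diagonally scaled
lumped matrix `D̃⁻¹ Ã` coincide with the corresponding entries of `D⁻¹ A`:
`Ã i j / Ã i i = A i j / A i i` whenever `(i,j) ∈ S̃` and `A i j > 0`. -/
theorem distributed_lumping_positive_entries_unchanged
    (n : ℕ) (hn : 1 ≤ n)
    (A : Matrix (Fin n) (Fin n) ℝ)
    (Stil : Fin n → Fin n → Prop) [DecidableRel Stil]
    (hsub : ∀ i j, Stil i j → A i j ≠ 0)
    (hdiagmem : ∀ i, Stil i i)
    (e T : Fin n → ℝ)
    (he : ∀ i, e i = ∑ k, if A i k ≠ 0 ∧ ¬ Stil i k then A i k else 0)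
    (hT : ∀ i, T i = ∑ k, if Stil i k then |A i k| else 0)
    (Atil : Matrix (Fin n) (Fin n) ℝ)
    (hAtil : ∀ i j, Atil i j =
      if Stil i j then
        (if e i < 0 then A i j + e i * |A i j| / T i
         else if i = j then A i i + e i else A i j)
      else 0)
    (hApos : ∀ i, 0 < A i i)
    (hrowsum : ∀ i, 0 ≤ ∑ j, A i j)
    (hneg : ∀ i, ∃ k, k ≠ i ∧ Stil i k ∧ A i k < 0) :
    ∀ i, e i < 0 → ∀ j, Stil i j → 0 < A i j →
      Atil i j / Atil i i = A i j / A i i :=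
  distributed_lumping_positive_entries_unchanged_general n A Stil hdiagmem e T he hT Atil hAtil
    hApos hrowsum hneg
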